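/- Let V be a finite-dimensional real vector space, D ⊆ V ⊕ V* Lagrangian for the pairing ⟨(u,α),(v,β)⟩ = β(u) + α(v), and K ⊆ V a subspace with 𝒦 = K ⊕ {0} and 𝒦^⊥ = V ⊕ K°. Then the quotient ((D ∩ 𝒦^⊥) + 𝒦)/𝒦 has dimension dim V − dim K. -/

import Mathlib

open Module

/-- The canonical symmetric pairing on `V ⊕ V*`:
`⟨(u,α),(v,β)⟩ = β(u) + α(v)`. -/
noncomputable def pairingForm (V : Type*) [AddCommGroup V] [Module ℝ V] :
    LinearMap.BilinForm ℝ (V × Module.Dual ℝ V) :=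
  LinearMap.mk₂ ℝ (fun p q => q.2 p.1 + p.2 q.1)
    (fun p p' q => by
      simp only [Prod.fst_add, Prod.snd_add, map_add, LinearMap.add_apply]; ring)
    (fun c p q => by
      simp only [Prod.smul_fst, Prod.smul_snd, map_smul, LinearMap.smul_apply,
        smul_eq_mul]; ring)
    (fun p q q' => by
      simp only [Prod.fst_add, Prod.snd_add, map_add, LinearMap.add_apply]; ring)
    (fun p c q => by
      simp only [Prod.smul_fst, Prod.smul_snd, map_smul, LinearMap.smul_apply,
        smul_eq_mul]; ring)


variable (V : Type*) [AddCommGroup V] [Module ℝ V]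

/-- `𝒦 = K ⊕ {0} ⊆ V ⊕ V*`. -/
noncomputable def Kdirac (K : Submodule ℝ V) : Submodule ℝ (V × Module.Dual ℝ V) :=
  K.prod ⊥

/-- `𝒦^⊥ = V ⊕ K°`, the orthogonal of `𝒦` for the canonical pairing. -/
noncomputable def KdiracPerp (K : Submodule ℝ V) : Submodule ℝ (V × Module.Dual ℝ V) :=
  (⊤ : Submodule ℝ V).prod K.dualAnnihilator

/-!
For a nondegenerate form on `W` and a Lagrangian `D = D^⊥`, dimension counting gives
`dim D = dim W / 2`, and for any isotropic `L ⊆ L^⊥` the reduction `(D ∩ L^⊥) + L` is again of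
dimension `dim D`: indeed `D ∩ L^⊥ = (D + L)^⊥` and `(D ∩ L^⊥) ∩ L = D ∩ L`, so the two
Grassmann formulas for `D + L` and `(D ∩ L^⊥) + L` cancel. Here `L = 𝒦 = K ⊕ 0` is isotropic
with orthogonal `V ⊕ K°`, so the reduction has dimension `dim V` and contains `𝒦`.
-/

theorem Submodule.finrank_map_mkQ_add_finrank_of_le {K W : Type*} [DivisionRing K]
    [AddCommGroup W] [Module K W] [FiniteDimensional K W] {L S : Submodule K W} (h : L ≤ S) :
    finrank K (S.map L.mkQ) + finrank K L = finrank K S := by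
  have := LinearMap.finrank_range_add_finrank_ker (L.mkQ.domRestrict S)
  rwa [LinearMap.range_domRestrict, LinearMap.ker_domRestrict, Submodule.ker_mkQ,
    (Submodule.comapSubtypeEquivOfLe h).finrank_eq] at this

namespace LinearMap.BilinForm

variable {K W : Type*} [Field K] [AddCommGroup W] [Module K W]

theorem orthogonal_sup (B : LinearMap.BilinForm K W) (N L : Submodule K W) :
    B.orthogonal (N ⊔ L) = B.orthogonal N ⊓ B.orthogonal L :=
  le_antisymm (le_inf (orthogonal_le le_sup_left) (orthogonal_le le_sup_right)) <| by
    rintro m ⟨hN, hL⟩ x hx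
    obtain ⟨n, hn, l, hl, rfl⟩ := Submodule.mem_sup.mp hx
    rw [add_left, hN n hn, hL l hl, add_zero]

variable [FiniteDimensional K W] {B : LinearMap.BilinForm K W}

theorem finrank_add_finrank_of_orthogonal_eq_self (hB : B.Nondegenerate)
    {D : Submodule K W} (hD : B.orthogonal D = D) :
    finrank K D + finrank K D = finrank K W := by
  have hperp := finrank_orthogonal hB D
  rw [hD] at hperp
  have := D.finrank_le
  omega

theorem finrank_inf_orthogonal_sup_of_le_orthogonal (hB : B.Nondegenerate)
    {D L : Submodule K W} (hD : B.orthogonal D = D) (hL : L ≤ B.orthogonal L) :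
    finrank K ((D ⊓ B.orthogonal L) ⊔ L : Submodule K W) = finrank K D := by
  have hperp : finrank K (D ⊓ B.orthogonal L : Submodule K W)
      = finrank K W - finrank K (D ⊔ L : Submodule K W) := by
    rw [← finrank_orthogonal hB, orthogonal_sup, hD]
  have hinf : D ⊓ B.orthogonal L ⊓ L = D ⊓ L := by rw [inf_assoc, inf_eq_right.mpr hL]
  have hsup₁ := Submodule.finrank_sup_add_finrank_inf_eq D L
  have hsup₂ := Submodule.finrank_sup_add_finrank_inf_eq (D ⊓ B.orthogonal L) L
  have hdim := finrank_add_finrank_of_orthogonal_eq_self hB hD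
  have := (D ⊔ L).finrank_le
  rw [hinf] at hsup₂
  omega

end LinearMap.BilinForm

lemma pairingForm_apply (p q : V × Module.Dual ℝ V) :
    pairingForm V p q = q.2 p.1 + p.2 q.1 := rfl

lemma pairingForm_isRefl : (pairingForm V).IsRefl := by
  intro p q h
  rw [pairingForm_apply] at *
  linarith

lemma pairingForm_nondegenerate : (pairingForm V).Nondegenerate := by
  refine (pairingForm_isRefl V).nondegenerate_iff_separatingLeft.mpr fun p hp => ?_
  have hα : p.2 = 0 := LinearMap.ext fun u => by simpa [pairingForm_apply] using hp (u, 0)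
  have hu : p.1 = 0 := (Module.forall_dual_apply_eq_zero_iff ℝ p.1).mp fun φ => by
    simpa [pairingForm_apply] using hp (0, φ)
  exact Prod.ext hu hα

lemma orthogonal_Kdirac (K : Submodule ℝ V) :
    (pairingForm V).orthogonal (Kdirac V K) = KdiracPerp V K := by
  ext ⟨v, β⟩
  simp only [LinearMap.BilinForm.mem_orthogonal_iff, Kdirac, KdiracPerp, Submodule.mem_prod,
    Submodule.mem_top, true_and, Submodule.mem_dualAnnihilator, Submodule.mem_bot,
    and_imp, Prod.forall, pairingForm_apply]
  constructor
  · intro h u hu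
    simpa using h u 0 hu rfl
  · rintro h u α hu rfl
    simp [h u hu]

lemma Kdirac_le_KdiracPerp (K : Submodule ℝ V) : Kdirac V K ≤ KdiracPerp V K :=
  Submodule.prod_mono le_top bot_le

lemma finrank_Kdirac (K : Submodule ℝ V) : finrank ℝ (Kdirac V K) = finrank ℝ K := by
  rw [Kdirac, ← Submodule.map_inl]
  exact (Submodule.equivMapOfInjective _ LinearMap.inl_injective K).finrank_eq.symm

/-- for a Lagrangian `D ⊆ V ⊕ V*` and a subspace `K ⊆ V`, the
quotient `((D ∩ 𝒦^⊥) + 𝒦)/𝒦` has dimension `dim V − dim K`. -/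
theorem Dtilde_finrank
    [FiniteDimensional ℝ V]
    (D : Submodule ℝ (V × Module.Dual ℝ V))
    (hD : D = (pairingForm V).orthogonal D)
    (K : Submodule ℝ V) :
    Module.finrank ℝ
        (((D ⊓ KdiracPerp V K) ⊔ Kdirac V K).map (Kdirac V K).mkQ)
      = Module.finrank ℝ V - Module.finrank ℝ K := by
  have hB := pairingForm_nondegenerate V
  have hquot := Submodule.finrank_map_mkQ_add_finrank_of_le
    (le_sup_right : Kdirac V K ≤ (D ⊓ KdiracPerp V K) ⊔ Kdirac V K)
  have hred := LinearMap.BilinForm.finrank_inf_orthogonal_sup_of_le_orthogonal hB hD.symm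
    ((Kdirac_le_KdiracPerp V K).trans_eq (orthogonal_Kdirac V K).symm)
  have hdimD := LinearMap.BilinForm.finrank_add_finrank_of_orthogonal_eq_self hB hD.symm
  rw [orthogonal_Kdirac] at hred
  rw [finrank_Kdirac] at hquot
  rw [Module.finrank_prod, Subspace.dual_finrank_eq] at hdimD
  omega
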